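/- arXiv:2506.22261 — 4 statements merged into one kernel-verified Lean document; each statement's English description precedes it below -/
import Mathlib

section
/- Let 𝒢 = (V, E₁, E₂) be a 2-multimode graph. Fix a vertex z ∈ V and let X = {v ∈ V : d₁(v,z) < d₂(v,z)} and Y = V \ X (note z ∈ Y). Assume X is nonempty. Let α₀ = max_{v∈X} d₁(z,v) and β₀ = max_{v∈Y} d₂(z,v). Let y ∈ Y be a vertex maximizing d₁(v, X) over v ∈ Y, and let x ∈ X be a vertex maximizing d₂(v, Y) over v ∈ X. Then the quantity D̃ = max(d_𝒢(x,y), α₀, β₀) satisfies D(𝒢)/3 ≤ D̃ ≤ D(𝒢). -/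
/-!
Every vertex of `X` is within red distance `α₀` of `z` and every vertex of `Y` within blue
distance `β₀`, so two vertices on the same side are at mode distance at most `2 D̃`. For `u ∈ X`
and `v ∈ Y`, going in red from `v` to its nearest vertex of `X` and then through `z` gives
`d₁(u,v) ≤ d₁(y,X) + 2α₀ ≤ d₁(x,y) + 2α₀`, and symmetrically `d₂(u,v) ≤ d₂(x,y) + 2β₀`; hence
`d_𝒢(u,v) ≤ d_𝒢(x,y) + 2 max(α₀,β₀) ≤ 3 D̃`. Conversely `α₀` and `β₀` are themselves mode
distances from `z`, because on `X` the red distance to `z` is the smaller one and on `Y` the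
blue one.
-/

noncomputable section

namespace SimpleGraph

variable {V : Type*}

def infDist (G : SimpleGraph V) (v : V) (S : Set V) : ℕ :=
  sInf ((fun u => G.dist v u) '' S)

def modeDist (G₁ G₂ : SimpleGraph V) (u v : V) : ℕ :=
  min (G₁.dist u v) (G₂.dist u v)

section infDist

variable {G : SimpleGraph V} {S : Set V} {u v z : V} {r : ℕ}

theorem infDist_le_dist (hu : u ∈ S) : G.infDist v S ≤ G.dist v u :=
  Nat.sInf_le ⟨u, hu, rfl⟩

theorem exists_dist_eq_infDist (hS : S.Nonempty) : ∃ u ∈ S, G.dist v u = G.infDist v S :=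
  Nat.sInf_mem (hS.image _)

theorem Connected.dist_le_two_mul (hG : G.Connected) (hu : G.dist z u ≤ r)
    (hv : G.dist z v ≤ r) : G.dist u v ≤ 2 * r := by
  have := hG.dist_triangle (u := u) (v := z) (w := v)
  rw [dist_comm (u := u) (v := z)] at this
  omega

theorem Connected.dist_le_infDist_add (hG : G.Connected) (hr : ∀ w ∈ S, G.dist z w ≤ r)
    (hu : u ∈ S) (v : V) : G.dist v u ≤ G.infDist v S + 2 * r := by
  obtain ⟨w, hwS, hw⟩ := exists_dist_eq_infDist (G := G) (v := v) ⟨u, hu⟩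
  calc G.dist v u ≤ G.dist v w + G.dist w u := hG.dist_triangle
    _ ≤ G.infDist v S + 2 * r := by rw [hw]; gcongr; exact hG.dist_le_two_mul (hr w hwS) (hr u hu)

end infDist

section modeDist

variable {G₁ G₂ : SimpleGraph V}

theorem modeDist_comm (u v : V) : G₁.modeDist G₂ u v = G₁.modeDist G₂ v u := by
  simp only [modeDist, dist_comm (u := u)]

theorem modeDist_le_sSup [Finite V] (u v : V) :
    G₁.modeDist G₂ u v ≤ sSup {d | ∃ u v : V, d = G₁.modeDist G₂ u v} := by
  refine le_csSup ((Set.finite_range (Function.uncurry (G₁.modeDist G₂))).subset ?_).bddAbove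
    ⟨u, v, rfl⟩
  rintro _ ⟨u, v, rfl⟩
  exact ⟨(u, v), rfl⟩

variable (h₁ : G₁.Connected) (h₂ : G₂.Connected) {z : V} {X : Set V} {α β : ℕ}
  (hα : ∀ w ∈ X, G₁.dist z w ≤ α) (hβ : ∀ w ∈ Xᶜ, G₂.dist z w ≤ β)
  {x y : V} (hyY : y ∈ Xᶜ) (hy : ∀ v ∈ Xᶜ, G₁.infDist v X ≤ G₁.infDist y X)
  (hxX : x ∈ X) (hx : ∀ v ∈ X, G₂.infDist v Xᶜ ≤ G₂.infDist x Xᶜ)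
include h₁ h₂ hα hβ hyY hy hxX hx

theorem modeDist_le_add_of_mem_of_notMem {u v : V} (hu : u ∈ X) (hv : v ∈ Xᶜ) :
    G₁.modeDist G₂ u v ≤ G₁.modeDist G₂ x y + 2 * max α β := by
  have hred : G₁.dist u v ≤ G₁.dist x y + 2 * α :=
    calc G₁.dist u v = G₁.dist v u := dist_comm
      _ ≤ G₁.infDist v X + 2 * α := h₁.dist_le_infDist_add hα hu v
      _ ≤ G₁.dist y x + 2 * α := by gcongr; exact (hy v hv).trans (infDist_le_dist hxX)
      _ = G₁.dist x y + 2 * α := by rw [dist_comm]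
  have hblue : G₂.dist u v ≤ G₂.dist x y + 2 * β :=
    calc G₂.dist u v ≤ G₂.infDist u Xᶜ + 2 * β := h₂.dist_le_infDist_add hβ hv u
      _ ≤ G₂.dist x y + 2 * β := by gcongr; exact (hx u hu).trans (infDist_le_dist hyY)
  simp only [modeDist]
  omega

theorem modeDist_le_three_mul (u v : V) :
    G₁.modeDist G₂ u v ≤ 3 * max (G₁.modeDist G₂ x y) (max α β) := by
  by_cases hu : u ∈ X <;> by_cases hv : v ∈ X
  · have := h₁.dist_le_two_mul (hα u hu) (hα v hv)
    exact (min_le_left _ _).trans (by omega)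
  · have := modeDist_le_add_of_mem_of_notMem h₁ h₂ hα hβ hyY hy hxX hx hu hv
    omega
  · have := modeDist_le_add_of_mem_of_notMem h₁ h₂ hα hβ hyY hy hxX hx hv hu
    rw [modeDist_comm] at this
    omega
  · have := h₂.dist_le_two_mul (hβ u hu) (hβ v hv)
    exact (min_le_right _ _).trans (by omega)

end modeDist

end SimpleGraph

end

open SimpleGraph

theorem stmt0_general {V : Type*} [Fintype V] (G₁ G₂ : SimpleGraph V)
    (h₁ : G₁.Connected) (h₂ : G₂.Connected) (z : V)
    (X : Set V) (hX : X = {v | G₁.dist v z < G₂.dist v z})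
    (α₀ β₀ : ℕ)
    (hα : α₀ = sSup ((fun v => G₁.dist z v) '' X))
    (hβ : β₀ = sSup ((fun v => G₂.dist z v) '' Xᶜ))
    (x y : V) (hyY : y ∈ Xᶜ)
    (hy : ∀ v ∈ Xᶜ, sInf ((fun u => G₁.dist v u) '' X) ≤ sInf ((fun u => G₁.dist y u) '' X))
    (hxX : x ∈ X)
    (hx : ∀ v ∈ X, sInf ((fun u => G₂.dist v u) '' Xᶜ) ≤ sInf ((fun u => G₂.dist x u) '' Xᶜ))
    (Dtil Ddiam : ℕ)
    (hDtil : Dtil = max (min (G₁.dist x y) (G₂.dist x y)) (max α₀ β₀))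
    (hDiam : Ddiam = sSup {d : ℕ | ∃ u v : V, d = min (G₁.dist u v) (G₂.dist u v)}) :
    (Ddiam : ℝ) / 3 ≤ (Dtil : ℝ) ∧ Dtil ≤ Ddiam := by
  have hαX : ∀ w ∈ X, G₁.dist z w ≤ α₀ := fun w hw =>
    hα ▸ le_csSup ((Set.toFinite X).image _).bddAbove ⟨w, hw, rfl⟩
  have hβY : ∀ w ∈ Xᶜ, G₂.dist z w ≤ β₀ := fun w hw =>
    hβ ▸ le_csSup ((Set.toFinite Xᶜ).image _).bddAbove ⟨w, hw, rfl⟩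
  have hDiam_le : Ddiam ≤ 3 * Dtil := hDiam ▸ csSup_le' (by
    rintro _ ⟨u, v, rfl⟩
    exact hDtil ▸ modeDist_le_three_mul h₁ h₂ hαX hβY hyY hy hxX hx u v)
  have hα_le : α₀ ≤ Ddiam := hα ▸ csSup_le' (by
    rintro _ ⟨v, hv, rfl⟩
    rw [hX, Set.mem_ofPred_eq, dist_comm, dist_comm (G := G₂)] at hv
    exact hDiam ▸ (min_eq_left hv.le).symm.le.trans (modeDist_le_sSup z v))
  have hβ_le : β₀ ≤ Ddiam := hβ ▸ csSup_le' (by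
    rintro _ ⟨v, hv, rfl⟩
    rw [hX, Set.mem_compl_iff, Set.mem_ofPred_eq, not_lt, dist_comm, dist_comm (G := G₁)] at hv
    exact hDiam ▸ (min_eq_right hv).symm.le.trans (modeDist_le_sSup z v))
  refine ⟨?_, hDtil ▸ max_le (hDiam ▸ modeDist_le_sSup x y) (max_le hα_le hβ_le)⟩
  rw [div_le_iff₀ (by norm_num : (0 : ℝ) < 3)]
  exact_mod_cast (by omega : Ddiam ≤ Dtil * 3)

/-- The linear-time 3-approximation for the 2-mode diameter.
Given a 2-multimode graph (two connected simple graphs `G₁, G₂` on a finite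
vertex set), a vertex `z`, the set `X` of vertices strictly closer to `z` in
red than in blue (with `Yᶜ = X`'s complement playing the role of `Y`),
the extremal quantities `α₀, β₀`, and vertices `y ∈ Y` maximizing the red
distance to `X` and `x ∈ X` maximizing the blue distance to `Y`, the value
`D̃ = max(d_𝒢(x,y), α₀, β₀)` satisfies `D(𝒢)/3 ≤ D̃ ≤ D(𝒢)`. -/
theorem stmt0 {V : Type*} [Fintype V] (G₁ G₂ : SimpleGraph V)
    (h₁ : G₁.Connected) (h₂ : G₂.Connected) (z : V)
    (X : Set V) (hX : X = {v | G₁.dist v z < G₂.dist v z})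
    (hXne : X.Nonempty)
    (α₀ β₀ : ℕ)
    (hα : α₀ = sSup ((fun v => G₁.dist z v) '' X))
    (hβ : β₀ = sSup ((fun v => G₂.dist z v) '' Xᶜ))
    (x y : V) (hyY : y ∈ Xᶜ)
    (hy : ∀ v ∈ Xᶜ, sInf ((fun u => G₁.dist v u) '' X) ≤ sInf ((fun u => G₁.dist y u) '' X))
    (hxX : x ∈ X)
    (hx : ∀ v ∈ X, sInf ((fun u => G₂.dist v u) '' Xᶜ) ≤ sInf ((fun u => G₂.dist x u) '' Xᶜ))
    (Dtil Ddiam : ℕ)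
    (hDtil : Dtil = max (min (G₁.dist x y) (G₂.dist x y)) (max α₀ β₀))
    (hDiam : Ddiam = sSup {d : ℕ | ∃ u v : V, d = min (G₁.dist u v) (G₂.dist u v)}) :
    (Ddiam : ℝ) / 3 ≤ (Dtil : ℝ) ∧ Dtil ≤ Ddiam :=
  stmt0_general G₁ G₂ h₁ h₂ z X hX α₀ β₀ hα hβ x y hyY hy hxX hx Dtil Ddiam hDtil hDiam
end

section
/- Let 𝒢 = (V, E₁, E₂) be a 2-multimode graph, let D > 0 be a real number and 0 < α ≤ 1. Fix vertices x, y ∈ V and define X₁ = B₁(x, (1−α)D/2), Y₁ = B₂(y, (1−α)D/2), X₂ = B₁(x, (1+α)D/2) ∩ Y₁, and Y₂ = B₂(y, (1+α)D/2) ∩ X₁. Then for every a ∈ X₁ \ Y₂ and every b ∈ Y₁ \ X₂ one has d₁(a,b) ≥ αD and d₂(a,b) ≥ αD, and hence d_𝒢(a,b) ≥ αD. -/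
/-! Reverse triangle inequality: in `G₁` the vertex `a` is within `(1−α)D/2` of `x` while `b` is
at least `(1+α)D/2` from it; in `G₂` the same holds with `a, b` and `x, y` exchanged. -/

theorem SimpleGraph.Connected.dist_sub_dist_le {V : Type*} {G : SimpleGraph V}
    (hG : G.Connected) (u v w : V) : (G.dist u w : ℝ) - G.dist u v ≤ G.dist v w := by
  rw [sub_le_iff_le_add']
  exact_mod_cast hG.dist_triangle

theorem stmt1_general {V : Type*} (G₁ G₂ : SimpleGraph V)
    (h₁ : G₁.Connected) (h₂ : G₂.Connected)
    (D α : ℝ)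
    (x y : V) (X₁ Y₁ X₂ Y₂ : Set V)
    (hX₁ : X₁ = {v | (G₁.dist x v : ℝ) < (1 - α) * D / 2})
    (hY₁ : Y₁ = {v | (G₂.dist y v : ℝ) < (1 - α) * D / 2})
    (hX₂ : X₂ = {v | (G₁.dist x v : ℝ) < (1 + α) * D / 2} ∩ Y₁)
    (hY₂ : Y₂ = {v | (G₂.dist y v : ℝ) < (1 + α) * D / 2} ∩ X₁)
    (a b : V) (ha : a ∈ X₁ \ Y₂) (hb : b ∈ Y₁ \ X₂) :
    α * D ≤ (G₁.dist a b : ℝ) ∧ α * D ≤ (G₂.dist a b : ℝ) ∧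
      α * D ≤ min (G₁.dist a b : ℝ) (G₂.dist a b : ℝ) := by
  subst hX₁ hY₁ hX₂ hY₂
  obtain ⟨ha_near : (G₁.dist x a : ℝ) < (1 - α) * D / 2, ha_out⟩ := ha
  obtain ⟨hb_near : (G₂.dist y b : ℝ) < (1 - α) * D / 2, hb_out⟩ := hb
  have ha_far : (1 + α) * D / 2 ≤ G₂.dist y a := not_lt.mp fun h ↦ ha_out ⟨h, ha_near⟩
  have hb_far : (1 + α) * D / 2 ≤ G₁.dist x b := not_lt.mp fun h ↦ hb_out ⟨h, hb_near⟩
  have hd₁ : α * D ≤ G₁.dist a b := by linarith [h₁.dist_sub_dist_le x a b]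
  have hd₂ : α * D ≤ G₂.dist a b := by
    rw [G₂.dist_comm]
    linarith [h₂.dist_sub_dist_le y b a]
  exact ⟨hd₁, hd₂, le_min hd₁ hd₂⟩

/-- For a 2-multimode graph, vertices `x, y`, and the sets
`X₁ = B₁(x,(1−α)D/2)`, `Y₁ = B₂(y,(1−α)D/2)`, `X₂ = B₁(x,(1+α)D/2) ∩ Y₁`,
`Y₂ = B₂(y,(1+α)D/2) ∩ X₁`, any `a ∈ X₁ \ Y₂` and `b ∈ Y₁ \ X₂` satisfy
`d₁(a,b) ≥ αD`, `d₂(a,b) ≥ αD`, and hence `d_𝒢(a,b) ≥ αD`. -/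
theorem stmt1 {V : Type*} [Fintype V] (G₁ G₂ : SimpleGraph V)
    (h₁ : G₁.Connected) (h₂ : G₂.Connected)
    (D α : ℝ) (hD : 0 < D) (hα₀ : 0 < α) (hα₁ : α ≤ 1)
    (x y : V) (X₁ Y₁ X₂ Y₂ : Set V)
    (hX₁ : X₁ = {v | (G₁.dist x v : ℝ) < (1 - α) * D / 2})
    (hY₁ : Y₁ = {v | (G₂.dist y v : ℝ) < (1 - α) * D / 2})
    (hX₂ : X₂ = {v | (G₁.dist x v : ℝ) < (1 + α) * D / 2} ∩ Y₁)
    (hY₂ : Y₂ = {v | (G₂.dist y v : ℝ) < (1 + α) * D / 2} ∩ X₁)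
    (a b : V) (ha : a ∈ X₁ \ Y₂) (hb : b ∈ Y₁ \ X₂) :
    α * D ≤ (G₁.dist a b : ℝ) ∧ α * D ≤ (G₂.dist a b : ℝ) ∧
      α * D ≤ min (G₁.dist a b : ℝ) (G₂.dist a b : ℝ) :=
  stmt1_general G₁ G₂ h₁ h₂ D α x y X₁ Y₁ X₂ Y₂ hX₁ hY₁ hX₂ hY₂ a b ha hb
end

section
/- Let 𝒢 = (V, E₁, E₂) be a 2-multimode graph, let D be a positive integer, and let α be a real number with 1/3 < α ≤ 1/2 such that r := (1−α)D/2 is a natural number. Suppose s, t ∈ V satisfy d₁(s,t) ≥ D and d₂(s,t) ≥ D, and z ∈ V satisfies d_𝒢(z,v) < αD for every vertex v ∈ V. Then there exist vertices x ∈ B₁(z, (3α−1)D/2) and y ∈ B₂(z, (3α−1)D/2) such that either (d₁(x,s) ≤ r and d₂(y,t) ≤ r) or (d₁(x,t) ≤ r and d₂(y,s) ≤ r). -/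
/-!
If `s` and `t` were both `αD`-close to `z` in the same graph, the triangle inequality through `z`
would give `D ≤ dᵢ(s,t) < 2αD ≤ D`; hence one of them is close to `z` in `G₁` and the other in
`G₂`. For a vertex `w` with `d(z,w) < αD`, the vertex at distance `r` from `w` on a geodesic from
`z` to `w` lies at distance `< αD - r = (3α-1)D/2` from `z`.
-/

namespace SimpleGraph

variable {V : Type*} {G : SimpleGraph V} {z w : V}

theorem Reachable.exists_dist_le_sub_and_dist_le (h : G.Reachable z w) (n : ℕ) :
    ∃ x, G.dist z x ≤ G.dist z w - n ∧ G.dist x w ≤ n := by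
  obtain ⟨p, hp⟩ := h.exists_walk_length_eq_dist
  refine ⟨p.getVert (G.dist z w - n), ?_, ?_⟩
  · have := dist_le (p.take (G.dist z w - n))
    rw [Walk.take_length] at this
    omega
  · have := dist_le (p.drop (G.dist z w - n))
    rw [Walk.drop_length] at this
    omega

theorem Reachable.exists_dist_lt_and_dist_le (h : G.Reachable z w) {ρ : ℝ} (hρ : 0 < ρ) {n : ℕ}
    (hw : (G.dist z w : ℝ) < ρ + n) : ∃ x, (G.dist z x : ℝ) < ρ ∧ G.dist x w ≤ n := by
  obtain ⟨x, hzx, hxw⟩ := h.exists_dist_le_sub_and_dist_le n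
  refine ⟨x, ?_, hxw⟩
  rcases le_total n (G.dist z w) with hn | hn
  · have : (G.dist z x : ℝ) ≤ G.dist z w - n := by
      rw [← Nat.cast_sub hn]
      exact_mod_cast hzx
    linarith
  · have : G.dist z x = 0 := by omega
    simpa [this] using hρ

theorem Connected.dist_lt_add (hG : G.Connected) {s t : V} {a b : ℝ}
    (hs : (G.dist z s : ℝ) < a) (ht : (G.dist z t : ℝ) < b) : (G.dist s t : ℝ) < a + b := by
  have : G.dist s t ≤ G.dist z s + G.dist z t := G.dist_comm (u := s) ▸ hG.dist_triangle
  have : (G.dist s t : ℝ) ≤ G.dist z s + G.dist z t := by exact_mod_cast this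
  linarith

end SimpleGraph

theorem stmt5_general {V : Type*} (G₁ G₂ : SimpleGraph V)
    (h₁ : G₁.Connected) (h₂ : G₂.Connected)
    (D : ℕ) (α : ℝ) (hα₁ : 1 / 3 < α) (hα₂ : α ≤ 1 / 2)
    (r : ℕ) (hr : (r : ℝ) = (1 - α) * D / 2)
    (s t z : V)
    (hst₁ : (D : ℝ) ≤ (G₁.dist s t : ℝ)) (hst₂ : (D : ℝ) ≤ (G₂.dist s t : ℝ))
    (hz : ∀ v : V, min (G₁.dist z v : ℝ) (G₂.dist z v : ℝ) < α * D) :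
    ∃ x y : V, (G₁.dist z x : ℝ) < (3 * α - 1) * D / 2 ∧
      (G₂.dist z y : ℝ) < (3 * α - 1) * D / 2 ∧
      ((G₁.dist x s ≤ r ∧ G₂.dist y t ≤ r) ∨ (G₁.dist x t ≤ r ∧ G₂.dist y s ≤ r)) := by
  have hαD : 0 < α * D := (le_min (Nat.cast_nonneg _) (Nat.cast_nonneg _)).trans_lt (hz s)
  have hD : (0 : ℝ) < D := by nlinarith
  have hρ : 0 < (3 * α - 1) * D / 2 := by nlinarith
  have h2αD : 2 * (α * D) ≤ D := by nlinarith
  have close : ∀ G : SimpleGraph V, G.Connected → ∀ w, (G.dist z w : ℝ) < α * D →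
      ∃ x, (G.dist z x : ℝ) < (3 * α - 1) * D / 2 ∧ G.dist x w ≤ r :=
    fun G hG w hw ↦ (hG z w).exists_dist_lt_and_dist_le hρ (by linarith)
  rcases min_lt_iff.1 (hz s) with hs | hs <;> rcases min_lt_iff.1 (hz t) with ht | ht
  · linarith [h₁.dist_lt_add hs ht]
  · obtain ⟨x, hzx, hxs⟩ := close G₁ h₁ s hs
    obtain ⟨y, hzy, hyt⟩ := close G₂ h₂ t ht
    exact ⟨x, y, hzx, hzy, .inl ⟨hxs, hyt⟩⟩
  · obtain ⟨x, hzx, hxt⟩ := close G₁ h₁ t ht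
    obtain ⟨y, hzy, hys⟩ := close G₂ h₂ s hs
    exact ⟨x, y, hzx, hzy, .inr ⟨hxt, hys⟩⟩
  · linarith [h₂.dist_lt_add hs ht]

/-- If `d₁(s,t) ≥ D`, `d₂(s,t) ≥ D` and `z` has 2-mode distance
`< αD` from every vertex (with `1/3 < α ≤ 1/2`, `D` a positive integer and
`r = (1−α)D/2 ∈ ℕ`), then there exist `x ∈ B₁(z,(3α−1)D/2)` and
`y ∈ B₂(z,(3α−1)D/2)` with either (`d₁(x,s) ≤ r` and `d₂(y,t) ≤ r`) or
(`d₁(x,t) ≤ r` and `d₂(y,s) ≤ r`). -/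
theorem stmt5 {V : Type*} [Fintype V] (G₁ G₂ : SimpleGraph V)
    (h₁ : G₁.Connected) (h₂ : G₂.Connected)
    (D : ℕ) (hD : 0 < D) (α : ℝ) (hα₁ : 1 / 3 < α) (hα₂ : α ≤ 1 / 2)
    (r : ℕ) (hr : (r : ℝ) = (1 - α) * D / 2)
    (s t z : V)
    (hst₁ : (D : ℝ) ≤ (G₁.dist s t : ℝ)) (hst₂ : (D : ℝ) ≤ (G₂.dist s t : ℝ))
    (hz : ∀ v : V, min (G₁.dist z v : ℝ) (G₂.dist z v : ℝ) < α * D) :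
    ∃ x y : V, (G₁.dist z x : ℝ) < (3 * α - 1) * D / 2 ∧
      (G₂.dist z y : ℝ) < (3 * α - 1) * D / 2 ∧
      ((G₁.dist x s ≤ r ∧ G₂.dist y t ≤ r) ∨ (G₁.dist x t ≤ r ∧ G₂.dist y s ≤ r)) :=
  stmt5_general G₁ G₂ h₁ h₂ D α hα₁ hα₂ r hr s t z hst₁ hst₂ hz
end

section
/- Let 𝒢 = (V, E₁, E₂, E₃) be a 3-multimode graph, let D > 0 be a real number, and fix p ∈ V. Define X = B₁(p, D/3), Y = B₂(p, D/3) \ X, X₀ = {y ∈ Y : ∃ x ∈ X, d₁(x,y) < D/3}, Y₀ = {x ∈ X : ∃ y ∈ Y, d₂(x,y) < D/3}, X₁ = X \ Y₀, and Y₁ = Y \ X₀. Suppose there exist x̂ ∈ X₁ and ŷ ∈ Y₁ such that X₁ ⊆ B₃(ŷ, D/3) and Y₁ ⊆ B₃(x̂, D/3). Then for every x ∈ X and y ∈ Y one has d_𝒢(x,y) < D. -/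
/-!
Cover `X × Y` by three cases. If `y ∈ X₀`, some `x' ∈ X` is `d₁`-close to `y`, and the path
`x → p → x' → y` has three `G₁`-legs of length `< D/3`. Symmetrically, if `x ∈ Y₀` the path
`x → y' → p → y` works in `G₂`. Otherwise `x ∈ X₁` and `y ∈ Y₁`, and the path `x → ŷ → x̂ → y`
works in `G₃`, because both `x` and `x̂` lie in `X₁ ⊆ B₃(ŷ, D/3)` and `y ∈ Y₁ ⊆ B₃(x̂, D/3)`.
-/

namespace SimpleGraph.Connected

variable {V : Type*} {G : SimpleGraph V}

theorem dist_lt_of_three_legs (hG : G.Connected) {a b c d : V} {r : ℝ}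
    (hab : (G.dist a b : ℝ) < r / 3) (hbc : (G.dist b c : ℝ) < r / 3)
    (hcd : (G.dist c d : ℝ) < r / 3) : (G.dist a d : ℝ) < r := by
  have hchain : (G.dist a d : ℝ) ≤ G.dist a b + G.dist b c + G.dist c d := by
    exact_mod_cast (hG.dist_triangle (v := c)).trans (Nat.add_le_add_right hG.dist_triangle _)
  linarith

end SimpleGraph.Connected

theorem stmt14_general {V : Type*} (G₁ G₂ G₃ : SimpleGraph V)
    (h₁ : G₁.Connected) (h₂ : G₂.Connected) (h₃ : G₃.Connected)
    (D : ℝ) (p : V)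
    (X Y X₀ Y₀ X₁ Y₁ : Set V)
    (hX : X = {v | (G₁.dist p v : ℝ) < D / 3})
    (hY : Y = {v | (G₂.dist p v : ℝ) < D / 3} \ X)
    (hX₀ : X₀ = {y ∈ Y | ∃ x ∈ X, (G₁.dist x y : ℝ) < D / 3})
    (hY₀ : Y₀ = {x ∈ X | ∃ y ∈ Y, (G₂.dist x y : ℝ) < D / 3})
    (hX₁ : X₁ = X \ Y₀) (hY₁ : Y₁ = Y \ X₀)
    (xh yh : V) (hxh : xh ∈ X₁)
    (hX₁sub : X₁ ⊆ {v | (G₃.dist yh v : ℝ) < D / 3})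
    (hY₁sub : Y₁ ⊆ {v | (G₃.dist xh v : ℝ) < D / 3}) :
    ∀ x ∈ X, ∀ y ∈ Y,
      min (G₁.dist x y : ℝ) (min (G₂.dist x y : ℝ) (G₃.dist x y : ℝ)) < D := by
  intro x hx y hy
  by_cases hyX₀ : y ∈ X₀
  · obtain ⟨-, x', hx', hx'y⟩ := hX₀ ▸ hyX₀
    rw [hX] at hx hx'
    have hxp : (G₁.dist x p : ℝ) < D / 3 := G₁.dist_comm (u := x) ▸ hx
    exact min_lt_iff.2 <| .inl <| h₁.dist_lt_of_three_legs hxp hx' hx'y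
  by_cases hxY₀ : x ∈ Y₀
  · obtain ⟨-, y', hy', hxy'⟩ := hY₀ ▸ hxY₀
    rw [hY] at hy hy'
    have hy'p : (G₂.dist y' p : ℝ) < D / 3 := G₂.dist_comm (u := y') ▸ hy'.1
    exact min_lt_iff.2 <| .inr <| min_lt_iff.2 <| .inl <| h₂.dist_lt_of_three_legs hxy' hy'p hy.1
  have hxyh : (G₃.dist x yh : ℝ) < D / 3 := G₃.dist_comm (u := x) ▸ hX₁sub (hX₁ ▸ ⟨hx, hxY₀⟩)
  have hyhxh : (G₃.dist yh xh : ℝ) < D / 3 := hX₁sub hxh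
  have hxhy : (G₃.dist xh y : ℝ) < D / 3 := hY₁sub (hY₁ ▸ ⟨hy, hyX₀⟩)
  exact min_lt_iff.2 <| .inr <| min_lt_iff.2 <| .inr <| h₃.dist_lt_of_three_legs hxyh hyhxh hxhy

/-- In a 3-multimode graph, with the sets `X, Y, X₀, Y₀, X₁, Y₁`
as in the 3-approximation algorithm, if there are `x̂ ∈ X₁` and `ŷ ∈ Y₁` with
`X₁ ⊆ B₃(ŷ, D/3)` and `Y₁ ⊆ B₃(x̂, D/3)`, then every `x ∈ X` and `y ∈ Y`
satisfy `d_𝒢(x,y) < D`. -/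
theorem stmt14 {V : Type*} [Fintype V] (G₁ G₂ G₃ : SimpleGraph V)
    (h₁ : G₁.Connected) (h₂ : G₂.Connected) (h₃ : G₃.Connected)
    (D : ℝ) (hD : 0 < D) (p : V)
    (X Y X₀ Y₀ X₁ Y₁ : Set V)
    (hX : X = {v | (G₁.dist p v : ℝ) < D / 3})
    (hY : Y = {v | (G₂.dist p v : ℝ) < D / 3} \ X)
    (hX₀ : X₀ = {y ∈ Y | ∃ x ∈ X, (G₁.dist x y : ℝ) < D / 3})
    (hY₀ : Y₀ = {x ∈ X | ∃ y ∈ Y, (G₂.dist x y : ℝ) < D / 3})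
    (hX₁ : X₁ = X \ Y₀) (hY₁ : Y₁ = Y \ X₀)
    (xh yh : V) (hxh : xh ∈ X₁) (hyh : yh ∈ Y₁)
    (hX₁sub : X₁ ⊆ {v | (G₃.dist yh v : ℝ) < D / 3})
    (hY₁sub : Y₁ ⊆ {v | (G₃.dist xh v : ℝ) < D / 3}) :
    ∀ x ∈ X, ∀ y ∈ Y,
      min (G₁.dist x y : ℝ) (min (G₂.dist x y : ℝ) (G₃.dist x y : ℝ)) < D :=
  stmt14_general G₁ G₂ G₃ h₁ h₂ h₃ D p X Y X₀ Y₀ X₁ Y₁ hX hY hX₀ hY₀ hX₁ hY₁ xh yh hxh hX₁sub hY₁sub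
end
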